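/- Characterization of rer: Let X ⊆ 𝕃, a ∈ X, and f : 𝕃 → 𝕃 with f(a)|f(X ∖ {a}). Then f behaves as rer_a on X if and only if f preserves Q on X. -/

import Mathlib

/-!
Forward direction: take a quartet st:uv of X. If s and t lie in one cone at a, then u|st and
v|st survive, since f preserves C inside a cone, separates distinct cones, and splits f(a) off.
Otherwise st:uv forces at|u and at|v (and likewise for s); the triple a, u, v either has u, v in
one cone, separated from the cone of t, or is of the shape x|yza, y|za of condition (4); either
way f(u)f(v)|f(t), so f(s)f(t):f(u)f(v) holds on the other side.

Backward direction: every instance of conditions (2)–(4) is a quartet containing a, and since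
f(a) splits from the image of everything else, the image quartet can only be the required one.
-/

/-- The cone `S^c_a` of `a` at `c`: the class of `a` under E_c(x,y) ⟺ xy|c.
`Cr z x y` denotes C(z;x,y), i.e. xy|z. -/
def cone {L : Type*} (Cr : L → L → L → Prop) (c a : L) : Set L := {x | Cr c x a}

/-- `P|Q`: the sets `P` and `Q` split from each other: every pair from one splits off
from every point of the other. -/
def splitsSet {L : Type*} (Cr : L → L → L → Prop) (P Q : Set L) : Prop :=
  (∀ p₁ ∈ P, ∀ p₂ ∈ P, ∀ q ∈ Q, Cr q p₁ p₂) ∧ (∀ q₁ ∈ Q, ∀ q₂ ∈ Q, ∀ p ∈ P, Cr p q₁ q₂)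

/-- The derived quartet relation `ab:cd`: {a,b} splits from {c,d}, including the
degenerate cases of equalities. -/
def Qrel {L : Type*} (Cr : L → L → L → Prop) (a b c d : L) : Prop :=
  (Cr c a b ∧ Cr d a b) ∨ (Cr a c d ∧ Cr b c d) ∨
  (a = b ∧ a ≠ c ∧ a ≠ d) ∨ (c = d ∧ c ≠ a ∧ c ≠ b)

/-- `f` preserves `Q` on `X`. -/
def QPreservesOn {L : Type*} (Cr : L → L → L → Prop) (f : L → L) (X : Set L) : Prop :=
  ∀ a ∈ X, ∀ b ∈ X, ∀ u ∈ X, ∀ v ∈ X,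
    Qrel Cr a b u v → Qrel Cr (f a) (f b) (f u) (f v)

/-- Common cone conditions (1)–(3) of Definition of the behaviors at a constant `c`:
(1) f(c)|f(A∩S^c_a); (2) f preserves C on each A∩S^c_a; (3) distinct cones have
splitting images. -/
def ConeConds {L : Type*} (Cr : L → L → L → Prop) (f : L → L) (c : L) (A : Set L) : Prop :=
  (∀ a ∈ A, ∀ x ∈ A ∩ cone Cr c a, ∀ y ∈ A ∩ cone Cr c a, Cr (f c) (f x) (f y)) ∧
  (∀ a ∈ A, ∀ x ∈ A ∩ cone Cr c a, ∀ y ∈ A ∩ cone Cr c a, ∀ z ∈ A ∩ cone Cr c a,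
    Cr z x y → Cr (f z) (f x) (f y)) ∧
  (∀ a ∈ A, ∀ b ∈ A, cone Cr c a = cone Cr c b ∨
    splitsSet Cr (f '' (A ∩ cone Cr c a)) (f '' (A ∩ cone Cr c b)))

/-- `f` behaves as `cut_c` on `A`: cone conditions and, for x,y,z ∈ A with x|yzc and
y|zc: f(x)f(y)f(z)|f(c) and f(x)|f(y)f(z). -/
def CutOn {L : Type*} (Cr : L → L → L → Prop) (f : L → L) (c : L) (A : Set L) : Prop :=
  ConeConds Cr f c A ∧
  ∀ x ∈ A, ∀ y ∈ A, ∀ z ∈ A,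
    (Cr x y z ∧ Cr x y c ∧ Cr x z c ∧ Cr y z c) →
    (Cr (f c) (f x) (f y) ∧ Cr (f c) (f x) (f z) ∧ Cr (f c) (f y) (f z) ∧
      Cr (f x) (f y) (f z))

/-- `f` behaves as `rer_c` on `A`: cone conditions and, for x,y,z ∈ A with x|yzc and
y|zc: f(x)f(y)f(z)|f(c) and f(x)f(y)|f(z). -/
def RerOn {L : Type*} (Cr : L → L → L → Prop) (f : L → L) (c : L) (A : Set L) : Prop :=
  ConeConds Cr f c A ∧
  ∀ x ∈ A, ∀ y ∈ A, ∀ z ∈ A,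
    (Cr x y z ∧ Cr x y c ∧ Cr x z c ∧ Cr y z c) →
    (Cr (f c) (f x) (f y) ∧ Cr (f c) (f x) (f z) ∧ Cr (f c) (f y) (f z) ∧
      Cr (f z) (f x) (f y))

/-- `f` behaves as `tilde-rer_c` on `A`: cone conditions and, for x,y ∈ A with x|yc:
f(y)|f(x)f(c). -/
def TildeRerOn {L : Type*} (Cr : L → L → L → Prop) (f : L → L) (c : L) (A : Set L) : Prop :=
  ConeConds Cr f c A ∧ ∀ x ∈ A, ∀ y ∈ A, Cr x y c → Cr (f y) (f x) (f c)

/-- The automorphisms of (𝕃;C), as self-maps of 𝕃. -/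
def AutC {L : Type*} (Cr : L → L → L → Prop) : Set (Function.End L) :=
  {α | Function.Bijective α ∧ ∀ z x y : L, Cr z x y ↔ Cr (α z) (α x) (α y)}

/-- `A` is `c`-universal: every finite `U` with a marked point `u` can be mapped by an
automorphism of (𝕃;C) into `A ∪ {c}` with `u ↦ c`. -/
def cUniversal {L : Type*} (Cr : L → L → L → Prop) (c : L) (A : Set L) : Prop :=
  ∀ U : Finset L, ∀ u ∈ U, ∃ α ∈ AutC Cr, α u = c ∧ ∀ x ∈ U, α x ∈ A ∪ {c}

structure IsCRelation {L : Type*} (Cr : L → L → L → Prop) : Prop where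
  symm : ∀ {z x y : L}, Cr z x y → Cr z y x
  asymm : ∀ {z x y : L}, Cr z x y → ¬ Cr y x z
  trans : ∀ {z x y w : L}, Cr z x y → Cr z y w → Cr z x w
  cr_or_cr : ∀ {z x y : L} (w : L), Cr z x y → Cr z w y ∨ Cr w x y
  cr_self : ∀ {z x : L}, x ≠ z → Cr z x x
  total : ∀ {u v w : L}, u ≠ v → u ≠ w → v ≠ w → Cr w u v ∨ Cr v u w ∨ Cr u v w

section
variable {L : Type*} {Cr : L → L → L → Prop}

theorem Qrel.swap {s t u v : L} (h : Qrel Cr s t u v) : Qrel Cr u v s t := by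
  rcases h with h | h | h | h
  exacts [Or.inr (Or.inl h), Or.inl h, Or.inr (Or.inr (Or.inr h)), Or.inr (Or.inr (Or.inl h))]

namespace IsCRelation

variable (hC : IsCRelation Cr)
include hC

theorem not_cr_self_left (x y : L) : ¬ Cr x x y := by
  intro h
  by_cases hxy : x = y
  · subst hxy
    exact hC.asymm h h
  · exact hC.asymm h (hC.cr_self hxy)

theorem ne_left {z x y : L} (h : Cr z x y) : z ≠ x := by
  rintro rfl
  exact hC.not_cr_self_left z y h

theorem ne_right {z x y : L} (h : Cr z x y) : z ≠ y :=
  hC.ne_left (hC.symm h)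

theorem not_cr_of_cr {z x y : L} (h : Cr z x y) : ¬ Cr x z y :=
  fun h' => hC.asymm (hC.symm h) (hC.symm h')

theorem cr_of_cr_of_not_cr {c u v t : L} (h : Cr c u v) (hn : ¬ Cr c u t) : Cr t u v :=
  (hC.cr_or_cr t h).resolve_left fun h' => hn (hC.trans h (hC.symm h'))

theorem mem_cone_self {c x : L} (hx : x ≠ c) : x ∈ cone Cr c x :=
  hC.cr_self hx

theorem cone_eq_of_cr {c x y : L} (h : Cr c x y) : cone Cr c x = cone Cr c y := by
  ext z
  exact ⟨fun hz => hC.trans hz h, fun hz => hC.trans hz (hC.symm h)⟩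

theorem qrel_iff {s t u v : L} :
    Qrel Cr s t u v ↔ (Cr u s t ∧ Cr v s t) ∨ (Cr s u v ∧ Cr t u v) := by
  refine ⟨?_, fun h => h.elim Or.inl (Or.inr ∘ Or.inl)⟩
  rintro (h | h | ⟨rfl, hsu, hsv⟩ | ⟨rfl, hus, hut⟩)
  · exact Or.inl h
  · exact Or.inr h
  · exact Or.inl ⟨hC.cr_self hsu, hC.cr_self hsv⟩
  · exact Or.inr ⟨hC.cr_self hus, hC.cr_self hut⟩

theorem cr_of_qrel {p q r d : L} (hpq : Cr d p q) (hrp : Cr d r p) (h : Qrel Cr p q r d) :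
    Cr r p q := by
  rcases h with ⟨h, -⟩ | ⟨h, -⟩ | ⟨rfl, hpr, -⟩ | ⟨rfl, -, -⟩
  · exact h
  · exact absurd h (hC.asymm hrp)
  · exact hC.cr_self hpr
  · exact hpq

end IsCRelation

variable {f : L → L}

theorem ConeConds.cr_image_of_same_cone (hC : IsCRelation Cr) {c : L} {A : Set L}
    (hf : ConeConds Cr f c A) (hcA : c ∉ A) {s t w : L} (hs : s ∈ A) (ht : t ∈ A)
    (hw : w ∈ A) (hst : Cr c s t) (hwst : Cr w s t) : Cr (f w) (f s) (f t) := by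
  have hs' : s ∈ A ∩ cone Cr c s := ⟨hs, hC.mem_cone_self (ne_of_mem_of_not_mem hs hcA)⟩
  have ht' : t ∈ A ∩ cone Cr c s := ⟨ht, hC.symm hst⟩
  by_cases hws : Cr c w s
  · exact hf.2.1 s hs s hs' t ht' w ⟨hw, hws⟩ hwst
  have hw' : w ∈ A ∩ cone Cr c w := ⟨hw, hC.mem_cone_self (ne_of_mem_of_not_mem hw hcA)⟩
  rcases hf.2.2 s hs w hw with hcone | hsplit
  · exact absurd (show w ∈ cone Cr c s from hcone ▸ hw'.2) hws
  · exact hsplit.1 _ ⟨s, hs', rfl⟩ _ ⟨t, ht', rfl⟩ _ ⟨w, hw', rfl⟩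

theorem RerOn.cr_image_of_root_pair (hC : IsCRelation Cr) {c : L} {A : Set L}
    (hf : RerOn Cr f c A) (hcA : c ∉ A) {t u v : L} (ht : t ∈ A) (hu : u ∈ A) (hv : v ∈ A)
    (hut : Cr u c t) (hvt : Cr v c t) : Cr (f t) (f u) (f v) := by
  have hne : ∀ {x}, x ∈ A → x ≠ c := fun hx => ne_of_mem_of_not_mem hx hcA
  rcases eq_or_ne u v with rfl | huv
  · exact hf.1.cr_image_of_same_cone hC hcA hu hu ht (hC.cr_self (hne hu))
      (hC.cr_self (hC.ne_right hut))
  rcases hC.total huv (hne hu) (hne hv) with h | h | h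
  · exact hf.1.cr_image_of_same_cone hC hcA hu hv ht h
      (hC.cr_of_cr_of_not_cr h (hC.not_cr_of_cr hut))
  · exact hC.symm (hf.2 v hv u hu t ht ⟨hC.trans h hvt, h, hC.symm hvt, hC.symm hut⟩).2.2.2
  · exact (hf.2 u hu v hv t ht ⟨hC.trans h hut, h, hC.symm hut, hC.symm hvt⟩).2.2.2

variable {X : Set L} {a : L}

theorem RerOn.qrel_image_of_cr_cr (hC : IsCRelation Cr) (hf : RerOn Cr f a (X \ {a}))
    (hsplit : ∀ s ∈ X \ {a}, ∀ t ∈ X \ {a}, Cr (f a) (f s) (f t)) {s t u v : L}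
    (hs : s ∈ X) (ht : t ∈ X) (hu : u ∈ X) (hv : v ∈ X) (hust : Cr u s t) (hvst : Cr v s t) :
    Qrel Cr (f s) (f t) (f u) (f v) := by
  have haX : a ∉ X \ {a} := fun h => h.2 rfl
  have same_cone : ∀ {w}, w ∈ X → s ∈ X \ {a} → t ∈ X \ {a} → Cr a s t → Cr w s t →
      Cr (f w) (f s) (f t) := by
    intro w hw hs' ht' hst hwst
    rcases eq_or_ne w a with rfl | hwa
    · exact hsplit s hs' t ht'
    · exact hf.1.cr_image_of_same_cone hC haX hs' ht' ⟨hw, hwa⟩ hst hwst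
  have root_pair : ∀ {x}, x ∈ X → Cr u a x → Cr v a x → Cr (f x) (f u) (f v) := by
    intro x hx hux hvx
    have hu' : u ∈ X \ {a} := ⟨hu, hC.ne_left hux⟩
    have hv' : v ∈ X \ {a} := ⟨hv, hC.ne_left hvx⟩
    rcases eq_or_ne x a with rfl | hxa
    · exact hsplit u hu' v hv'
    · exact hf.cr_image_of_root_pair hC haX ⟨hx, hxa⟩ hu' hv' hux hvx
  by_cases hst : Cr a s t
  · have hs' : s ∈ X \ {a} := ⟨hs, (hC.ne_left hst).symm⟩
    have ht' : t ∈ X \ {a} := ⟨ht, (hC.ne_right hst).symm⟩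
    exact Or.inl ⟨same_cone hu hs' ht' hst hust, same_cone hv hs' ht' hst hvst⟩
  have at_of : ∀ {w}, Cr w s t → Cr w a t := fun h => (hC.cr_or_cr a h).resolve_right hst
  have as_of : ∀ {w}, Cr w s t → Cr w a s := fun h =>
    (hC.cr_or_cr a (hC.symm h)).resolve_right fun h' => hst (hC.symm h')
  exact Or.inr (Or.inl ⟨root_pair hs (as_of hust) (as_of hvst),
    root_pair ht (at_of hust) (at_of hvst)⟩)

theorem RerOn.qPreservesOn (hC : IsCRelation Cr) (hf : RerOn Cr f a (X \ {a}))
    (hsplit : ∀ s ∈ X \ {a}, ∀ t ∈ X \ {a}, Cr (f a) (f s) (f t)) : QPreservesOn Cr f X := by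
  intro s hs t ht u hu v hv hq
  rcases hC.qrel_iff.mp hq with ⟨hust, hvst⟩ | ⟨hsuv, htuv⟩
  · exact hf.qrel_image_of_cr_cr hC hsplit hs ht hu hv hust hvst
  · exact (hf.qrel_image_of_cr_cr hC hsplit hu hv hs ht hsuv htuv).swap

theorem QPreservesOn.cr_image (hC : IsCRelation Cr) (hQ : QPreservesOn Cr f X) (ha : a ∈ X)
    (hsplit : ∀ s ∈ X \ {a}, ∀ t ∈ X \ {a}, Cr (f a) (f s) (f t)) {x y z : L}
    (hx : x ∈ X \ {a}) (hy : y ∈ X \ {a}) (hz : z ∈ X \ {a}) (h : Qrel Cr x y z a) :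
    Cr (f z) (f x) (f y) :=
  hC.cr_of_qrel (hsplit x hx y hy) (hsplit z hz x hx) (hQ x hx.1 y hy.1 z hz.1 a ha h)

theorem QPreservesOn.cr_image_of_not_cr (hC : IsCRelation Cr) (hQ : QPreservesOn Cr f X)
    (ha : a ∈ X) (hsplit : ∀ s ∈ X \ {a}, ∀ t ∈ X \ {a}, Cr (f a) (f s) (f t))
    {b c u u' w : L} (hbc : ¬ Cr a b c) (hu : u ∈ X \ {a} ∩ cone Cr a b)
    (hu' : u' ∈ X \ {a} ∩ cone Cr a b) (hw : w ∈ X \ {a} ∩ cone Cr a c) :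
    Cr (f w) (f u) (f u') := by
  have huu' : Cr a u u' := hC.trans hu.2 (hC.symm hu'.2)
  have huw : ¬ Cr a u w := fun h => hbc (hC.trans (hC.trans (hC.symm hu.2) h) hw.2)
  exact hQ.cr_image hC ha hsplit hu.1 hu'.1 hw.1
    (Or.inl ⟨hC.cr_of_cr_of_not_cr huu' huw, huu'⟩)

theorem QPreservesOn.rerOn (hC : IsCRelation Cr) (hQ : QPreservesOn Cr f X) (ha : a ∈ X)
    (hsplit : ∀ s ∈ X \ {a}, ∀ t ∈ X \ {a}, Cr (f a) (f s) (f t)) :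
    RerOn Cr f a (X \ {a}) := by
  refine ⟨⟨fun _ _ x hx y hy => hsplit x hx.1 y hy.1, ?_, ?_⟩, ?_⟩
  · intro b _ x hx y hy z hz hzxy
    exact hQ.cr_image hC ha hsplit hx.1 hy.1 hz.1
      (Or.inl ⟨hzxy, hC.trans hx.2 (hC.symm hy.2)⟩)
  · intro b _ c _
    by_cases hbc : Cr a b c
    · exact Or.inl (hC.cone_eq_of_cr hbc)
    refine Or.inr ⟨?_, ?_⟩
    · rintro _ ⟨u, hu, rfl⟩ _ ⟨u', hu', rfl⟩ _ ⟨w, hw, rfl⟩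
      exact hQ.cr_image_of_not_cr hC ha hsplit hbc hu hu' hw
    · rintro _ ⟨u, hu, rfl⟩ _ ⟨u', hu', rfl⟩ _ ⟨w, hw, rfl⟩
      exact hQ.cr_image_of_not_cr hC ha hsplit (fun h => hbc (hC.symm h)) hu hu' hw
  · rintro x hx y hy z hz ⟨-, -, hxz, hyz⟩
    exact ⟨hsplit x hx y hy, hsplit x hx z hz, hsplit y hy z hz,
      hQ.cr_image hC ha hsplit hx hy hz (Or.inr (Or.inl ⟨hxz, hyz⟩))⟩

end

/-- Characterization of `rer`: if `f(a)|f(X ∖ {a})`, then `f` behaves as `rer_a` on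
`X ∖ {a}` if and only if `f` preserves `Q` on `X`. -/
theorem stmt15 {L : Type*} (Cr : L → L → L → Prop)
    (hsym : ∀ z x y : L, Cr z x y → Cr z y x)
    (hC2 : ∀ z x y : L, Cr z x y → ¬ Cr y x z)
    (htrans : ∀ z x y w : L, Cr z x y → Cr z y w → Cr z x w)
    (hC3 : ∀ z x y w : L, Cr z x y → (Cr z w y ∨ Cr w x y))
    (hC4 : ∀ z x : L, x ≠ z → Cr z x x)
    (hC8 : ∀ u v w : L, u ≠ v → u ≠ w → v ≠ w → Cr w u v ∨ Cr v u w ∨ Cr u v w)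
    (X : Set L) (a : L) (ha : a ∈ X) (f : L → L)
    (hsplit : ∀ s ∈ X \ {a}, ∀ t ∈ X \ {a}, Cr (f a) (f s) (f t)) :
    RerOn Cr f a (X \ {a}) ↔ QPreservesOn Cr f X := by
  have hC : IsCRelation Cr :=
    ⟨hsym _ _ _, hC2 _ _ _, htrans _ _ _ _, hC3 _ _ _, hC4 _ _, hC8 _ _ _⟩
  exact ⟨fun hf => hf.qPreservesOn hC hsplit, fun hQ => hQ.rerOn hC ha hsplit⟩
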